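/- arXiv:2011.12726 — 2 statements merged into one kernel-verified Lean document; each statement's English description precedes it below -/
import Mathlib

section
/- Consider the RNN x(0) = 0, x(k+1) = Λ x(k) + W_in w(k) + v(k), z(k) = W_out x(k), w(k) = Φ(z(k) + s(k)), where Λ ∈ ℝ^{n×n} is Schur–Cohn stable, W_in ∈ ℝ^{n×m}, W_out ∈ ℝ^{m×n}, Φ is the ReLU, and s, v are external inputs. Suppose there exists a diagonal matrix D ∈ ℝ^{m×m} with strictly positive diagonal entries such that the discrete-time LTI system with matrices (Λ, W_in D, D^{-1} W_out, 0) has positive l2 induced norm strictly less than 1. Then the RNN is finite-gain l2 stable: there exists γ ≥ 0 such that for all inputs s, v and all τ ∈ ℕ, ‖z_τ‖_2² + ‖w_τ‖_2² ≤ γ² (‖s_τ‖_2² + ‖v_τ‖_2²). -/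
/-!
Positive diagonal scaling commutes with the ReLU, so in the variables `z̃ = D⁻¹ z`,
`w̃ = D⁻¹ w`, `s̃ = D⁻¹ s` the RNN reads `z̃ = G w̃ + H v`, `w̃ = Φ(z̃ + s̃)`, where
`G = (Λ, W_in D, D⁻¹ W_out, 0)` only ever receives the nonnegative input `w̃` and
`H = (Λ, 1, D⁻¹ W_out, 0)`. Both systems are causal, so their gains bound truncated signals:
`‖z̃_τ‖ ≤ g ‖w̃_τ‖ + β ‖v_τ‖` with `g = ‖G‖_{2+} < 1`, while `|Φ(ξ)| ≤ |ξ|` gives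
`‖w̃_τ‖ ≤ ‖z̃_τ‖ + ‖s̃_τ‖`. Eliminating `‖z̃_τ‖` bounds `‖w̃_τ‖`, and then `‖z̃_τ‖`, by a
multiple of `‖s_τ‖ + ‖v_τ‖`. Schur stability makes `∑ ‖Λ^k‖` finite (Gelfand's formula),
which makes `β` and the supremum defining `g` finite.
-/

open Matrix

noncomputable section

/-- A symmetric matrix is copositive if its quadratic form is nonnegative on the
nonnegative orthant. -/
def Copositive {q : Type*} [Fintype q] (Q : Matrix q q ℝ) : Prop :=
  Q.IsSymm ∧ ∀ x : q → ℝ, (∀ i, 0 ≤ x i) → 0 ≤ x ⬝ᵥ Q.mulVec x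

/-- The matrix L(A,B,C,D,P,Q,γ). -/
def Lmat {n w z : Type*} [Fintype n] [Fintype w] [Fintype z]
    [DecidableEq n] [DecidableEq w] [DecidableEq z]
    (A : Matrix n n ℝ) (B : Matrix n w ℝ) (C : Matrix z n ℝ) (D : Matrix z w ℝ)
    (P : Matrix n n ℝ) (Q : Matrix w w ℝ) (γ : ℝ) : Matrix (n ⊕ w) (n ⊕ w) ℝ :=
  Matrix.fromBlocks (-P) 0 0 ((-(γ ^ 2)) • (1 : Matrix w w ℝ) + Q)
    + (Matrix.fromBlocks A B C D)ᵀ * Matrix.fromBlocks P 0 0 (1 : Matrix z z ℝ)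
      * Matrix.fromBlocks A B C D

/-- State of the LTI system x(k+1) = A x(k) + B w(k), x(0) = 0. -/
def ltiState {n w : Type*} [Fintype n] [Fintype w]
    (A : Matrix n n ℝ) (B : Matrix n w ℝ) (ws : ℕ → w → ℝ) : ℕ → n → ℝ
  | 0 => 0
  | k + 1 => A.mulVec (ltiState A B ws k) + B.mulVec (ws k)

/-- Output z(k) = C x(k) + D w(k). -/
def ltiOutput {n w z : Type*} [Fintype n] [Fintype w] [Fintype z]
    (A : Matrix n n ℝ) (B : Matrix n w ℝ) (C : Matrix z n ℝ) (D : Matrix z w ℝ)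
    (ws : ℕ → w → ℝ) (k : ℕ) : z → ℝ :=
  C.mulVec (ltiState A B ws k) + D.mulVec (ws k)

/-- l2 norm of a discrete-time signal. -/
def sigNorm {w : Type*} [Fintype w] (u : ℕ → w → ℝ) : ℝ :=
  Real.sqrt (∑' k, ∑ i, (u k i) ^ 2)

/-- Euclidean norm of a vector. -/
def vecNorm {ι : Type*} [Fintype ι] (v : ι → ℝ) : ℝ :=
  Real.sqrt (∑ i, (v i) ^ 2)

/-- The positive l2 induced norm of the system (A,B,C,D). -/
def posL2Gain {n w z : Type*} [Fintype n] [Fintype w] [Fintype z]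
    (A : Matrix n n ℝ) (B : Matrix n w ℝ) (C : Matrix z n ℝ) (D : Matrix z w ℝ) : ℝ :=
  sSup {c : ℝ | ∃ ws : ℕ → w → ℝ, (∀ k i, 0 ≤ ws k i) ∧
    Summable (fun k => ∑ i, (ws k i) ^ 2) ∧ sigNorm ws = 1 ∧
    c = sigNorm (ltiOutput A B C D ws)}

/-- The l2 induced norm of the system (A,B,C,D). -/
def l2Gain {n w z : Type*} [Fintype n] [Fintype w] [Fintype z]
    (A : Matrix n n ℝ) (B : Matrix n w ℝ) (C : Matrix z n ℝ) (D : Matrix z w ℝ) : ℝ :=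
  sSup {c : ℝ | ∃ ws : ℕ → w → ℝ,
    Summable (fun k => ∑ i, (ws k i) ^ 2) ∧ sigNorm ws = 1 ∧
    c = sigNorm (ltiOutput A B C D ws)}

/-- Schur–Cohn stability: the spectral radius (over ℂ) is < 1. -/
def SchurStable {n : Type*} [Fintype n] [DecidableEq n] (A : Matrix n n ℝ) : Prop :=
  spectralRadius ℂ (A.map (algebraMap ℝ ℂ)) < 1

/-- Lifted A matrix. -/
def liftA {n : Type*} [Fintype n] [DecidableEq n] (A : Matrix n n ℝ) (N : ℕ) :
    Matrix n n ℝ := A ^ N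

/-- Lifted B matrix. -/
def liftB {n w : Type*} [Fintype n] [DecidableEq n]
    (A : Matrix n n ℝ) (B : Matrix n w ℝ) (N : ℕ) : Matrix n (Fin N × w) ℝ :=
  Matrix.of fun r c => (A ^ (N - 1 - (c.1 : ℕ)) * B) r c.2

/-- Lifted C matrix. -/
def liftC {n z : Type*} [Fintype n] [DecidableEq n]
    (A : Matrix n n ℝ) (C : Matrix z n ℝ) (N : ℕ) : Matrix (Fin N × z) n ℝ :=
  Matrix.of fun r c => (C * A ^ (r.1 : ℕ)) r.2 c

/-- Lifted D matrix. -/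
def liftD {n w z : Type*} [Fintype n] [DecidableEq n]
    (A : Matrix n n ℝ) (B : Matrix n w ℝ) (C : Matrix z n ℝ) (D : Matrix z w ℝ)
    (N : ℕ) : Matrix (Fin N × z) (Fin N × w) ℝ :=
  Matrix.of fun r c =>
    if (r.1 : ℕ) = (c.1 : ℕ) then D r.2 c.2
    else if (c.1 : ℕ) < (r.1 : ℕ) then (C * A ^ ((r.1 : ℕ) - (c.1 : ℕ) - 1) * B) r.2 c.2
    else 0

/-- ReLU. -/
def relu {ι : Type*} (ξ : ι → ℝ) : ι → ℝ := fun i => max (ξ i) 0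

/-- Positive maximal singular value. -/
def matPosNorm {ι κ : Type*} [Fintype ι] [Fintype κ] (M : Matrix ι κ ℝ) : ℝ :=
  sSup {c : ℝ | ∃ v : κ → ℝ, (∀ i, 0 ≤ v i) ∧ vecNorm v = 1 ∧ c = vecNorm (M.mulVec v)}

/-- Maximal singular value (spectral norm). -/
def matNorm {ι κ : Type*} [Fintype ι] [Fintype κ] (M : Matrix ι κ ℝ) : ℝ :=
  sSup {c : ℝ | ∃ v : κ → ℝ, vecNorm v = 1 ∧ c = vecNorm (M.mulVec v)}


/-- State of the RNN x(k+1) = Λ x(k) + W_in Φ(W_out x(k) + s(k)) + v(k), x(0) = 0,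
where Φ is the ReLU. -/
def rnnState {n m : ℕ} (Λ : Matrix (Fin n) (Fin n) ℝ) (Win : Matrix (Fin n) (Fin m) ℝ)
    (Wout : Matrix (Fin m) (Fin n) ℝ) (s : ℕ → Fin m → ℝ) (v : ℕ → Fin n → ℝ) :
    ℕ → Fin n → ℝ
  | 0 => 0
  | k + 1 =>
      Λ.mulVec (rnnState Λ Win Wout s v k)
        + Win.mulVec (relu (Wout.mulVec (rnnState Λ Win Wout s v k) + s k)) + v k

/-- Squared l2 norm of the truncation of a signal up to time instant τ. -/
def trNormSq {ι : Type*} [Fintype ι] (u : ℕ → ι → ℝ) (τ : ℕ) : ℝ :=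
  ∑ k ∈ Finset.range (τ + 1), ∑ i, (u k i) ^ 2

open Finset Filter

section Energy

variable {ι : Type*} [Fintype ι]

lemma vecNorm_nonneg (v : ι → ℝ) : 0 ≤ vecNorm v := Real.sqrt_nonneg _

lemma vecNorm_eq_norm (v : ι → ℝ) : vecNorm v = ‖WithLp.toLp 2 v‖ := by
  simp [vecNorm, EuclideanSpace.norm_eq]

lemma vecNorm_sum_le {α : Type*} (s : Finset α) (f : α → ι → ℝ) :
    vecNorm (∑ j ∈ s, f j) ≤ ∑ j ∈ s, vecNorm (f j) := by
  simpa only [vecNorm_eq_norm, WithLp.toLp_sum] using norm_sum_le _ _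

lemma sigNorm_nonneg (u : ℕ → ι → ℝ) : 0 ≤ sigNorm u := Real.sqrt_nonneg _

lemma sigNorm_smul (c : ℝ) (u : ℕ → ι → ℝ) : sigNorm (fun k => c • u k) = |c| * sigNorm u := by
  simp only [sigNorm, Pi.smul_apply, smul_eq_mul, mul_pow, ← mul_sum, tsum_mul_left]
  rw [Real.sqrt_mul (sq_nonneg c), Real.sqrt_sq_eq_abs]

lemma trNormSq_nonneg (u : ℕ → ι → ℝ) (τ : ℕ) : 0 ≤ trNormSq u τ := by
  unfold trNormSq; positivity

lemma trNormSq_eq_sum_vecNorm_sq (u : ℕ → ι → ℝ) (τ : ℕ) :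
    trNormSq u τ = ∑ k ∈ range (τ + 1), vecNorm (u k) ^ 2 := by
  simp only [trNormSq, vecNorm, Real.sq_sqrt (sum_nonneg fun i _ => sq_nonneg _)]

def trNorm (u : ℕ → ι → ℝ) (τ : ℕ) : ℝ := √(trNormSq u τ)

lemma trNorm_nonneg (u : ℕ → ι → ℝ) (τ : ℕ) : 0 ≤ trNorm u τ := Real.sqrt_nonneg _

lemma trNorm_sq (u : ℕ → ι → ℝ) (τ : ℕ) : trNorm u τ ^ 2 = trNormSq u τ :=
  Real.sq_sqrt (trNormSq_nonneg u τ)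

lemma trNorm_eq_norm (u : ℕ → ι → ℝ) (τ : ℕ) :
    trNorm u τ = ‖WithLp.toLp 2 (fun p : Fin (τ + 1) × ι => u p.1 p.2)‖ := by
  rw [trNorm, EuclideanSpace.norm_eq]
  simp [trNormSq, Fintype.sum_prod_type, Fin.sum_univ_eq_sum_range (fun k => ∑ i, u k i ^ 2)]

lemma trNorm_add_le (u v : ℕ → ι → ℝ) (τ : ℕ) :
    trNorm (u + v) τ ≤ trNorm u τ + trNorm v τ := by
  simp only [trNorm_eq_norm]
  exact (norm_add_le_of_le le_rfl le_rfl).trans_eq' rfl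

lemma trNorm_congr {u v : ℕ → ι → ℝ} {τ : ℕ} (h : ∀ k ≤ τ, u k = v k) : trNorm u τ = trNorm v τ :=
  congrArg _ <| sum_congr rfl fun k hk => by rw [h k (Nat.lt_succ_iff.1 (mem_range.1 hk))]

lemma trNorm_le_of_sq_le {u v : ℕ → ι → ℝ} (h : ∀ k i, u k i ^ 2 ≤ v k i ^ 2) (τ : ℕ) :
    trNorm u τ ≤ trNorm v τ :=
  Real.sqrt_le_sqrt <| sum_le_sum fun k _ => sum_le_sum fun i _ => h k i

lemma trNorm_diagonal_mulVec_le [DecidableEq ι] (c : ι → ℝ) (u : ℕ → ι → ℝ) (τ : ℕ) :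
    trNorm (fun k => diagonal c *ᵥ u k) τ ≤ ‖c‖ * trNorm u τ := by
  rw [← Real.sqrt_sq (norm_nonneg c), trNorm, trNorm, ← Real.sqrt_mul (sq_nonneg _), trNormSq,
    trNormSq, mul_sum]
  refine Real.sqrt_le_sqrt <| sum_le_sum fun k _ => ?_
  rw [mul_sum]
  refine sum_le_sum fun i _ => ?_
  rw [mulVec_diagonal, mul_pow]
  exact mul_le_mul_of_nonneg_right (sq_le_sq.2 (by simpa using norm_le_pi_norm c i))
    (sq_nonneg _)

lemma trNorm_le_norm_mul_trNorm_diagonal_mulVec [DecidableEq ι] {d e : ι → ℝ}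
    (hde : ∀ i, d i * e i = 1) (u : ℕ → ι → ℝ) (τ : ℕ) :
    trNorm u τ ≤ ‖d‖ * trNorm (fun k => diagonal e *ᵥ u k) τ := by
  convert trNorm_diagonal_mulVec_le d _ τ using 3 with k
  simp [mulVec_mulVec, diagonal_mul_diagonal, hde]

lemma sum_range_le_trNorm_sq (u : ℕ → ι → ℝ) (T : ℕ) :
    ∑ k ∈ range T, ∑ i, u k i ^ 2 ≤ trNorm u T ^ 2 := by
  rw [trNorm_sq]
  exact sum_le_sum_of_subset_of_nonneg (range_mono T.le_succ) fun k _ _ => by positivity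

lemma trNorm_le_sigNorm {u : ℕ → ι → ℝ} (hu : Summable fun k => ∑ i, u k i ^ 2) (τ : ℕ) :
    trNorm u τ ≤ sigNorm u :=
  Real.sqrt_le_sqrt <| hu.sum_le_tsum _ fun k _ => by positivity

lemma sigNorm_le_of_forall_trNorm_le {u : ℕ → ι → ℝ} {c : ℝ} (h : ∀ τ, trNorm u τ ≤ c) :
    sigNorm u ≤ c := by
  refine Real.sqrt_le_iff.2 ⟨(trNorm_nonneg u 0).trans (h 0),
    Real.tsum_le_of_sum_range_le (fun k => by positivity) fun T => ?_⟩
  exact (sum_range_le_trNorm_sq u T).trans (pow_le_pow_left₀ (trNorm_nonneg u T) (h T) 2)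

lemma summable_of_forall_trNorm_le {u : ℕ → ι → ℝ} {c : ℝ} (h : ∀ τ, trNorm u τ ≤ c) :
    Summable fun k => ∑ i, u k i ^ 2 :=
  summable_of_sum_range_le (c := c ^ 2) (fun k => by positivity) fun T =>
    (sum_range_le_trNorm_sq u T).trans (pow_le_pow_left₀ (trNorm_nonneg u T) (h T) 2)

end Energy

section Truncation

variable {ι : Type*}

def truncation (u : ℕ → ι → ℝ) (τ : ℕ) : ℕ → ι → ℝ := fun k => if k ≤ τ then u k else 0

lemma truncation_of_le (u : ℕ → ι → ℝ) {τ k : ℕ} (hk : k ≤ τ) : truncation u τ k = u k :=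
  if_pos hk

variable [Fintype ι]

lemma summable_truncation (u : ℕ → ι → ℝ) (τ : ℕ) :
    Summable fun k => ∑ i, truncation u τ k i ^ 2 :=
  summable_of_ne_finset_zero (s := range (τ + 1)) fun k hk => by
    simp [truncation, show ¬k ≤ τ by simpa [Nat.lt_succ_iff] using hk]

lemma sigNorm_truncation (u : ℕ → ι → ℝ) (τ : ℕ) : sigNorm (truncation u τ) = trNorm u τ := by
  rw [sigNorm, tsum_eq_sum (s := range (τ + 1)) fun k hk => ?_]
  · exact trNorm_congr fun k hk => truncation_of_le u hk
  · simp [truncation, show ¬k ≤ τ by simpa [Nat.lt_succ_iff] using hk]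

end Truncation

lemma sum_range_sq_conv_le {h a : ℕ → ℝ} {H : ℝ} (hh : ∀ i, 0 ≤ h i)
    (hH : ∀ k, ∑ i ∈ range k, h i ≤ H) (T : ℕ) :
    ∑ k ∈ range T, (∑ j ∈ range k, h (k - 1 - j) * a j) ^ 2
      ≤ H ^ 2 * ∑ j ∈ range T, a j ^ 2 := by
  have hH0 : 0 ≤ H := by simpa using hH 0
  -- weighted Cauchy–Schwarz with weights `h (k - 1 - j)`
  have hrow : ∀ k, (∑ j ∈ range k, h (k - 1 - j) * a j) ^ 2
      ≤ H * ∑ j ∈ range k, h (k - 1 - j) * a j ^ 2 := fun k => by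
    refine (sum_sq_le_sum_mul_sum_of_sq_le_mul _ (f := fun j => h (k - 1 - j))
      (fun j _ => hh _) (fun j _ => mul_nonneg (hh _) (sq_nonneg _))
      fun j _ => le_of_eq (by ring)).trans
      (mul_le_mul_of_nonneg_right ?_ (sum_nonneg fun j _ => mul_nonneg (hh _) (sq_nonneg _)))
    rw [sum_range_reflect (fun i => h i) k]
    exact hH k
  have hcol : ∀ j, ∑ k ∈ Ico (j + 1) T, h (k - 1 - j) ≤ H := fun j => by
    rw [sum_Ico_eq_sum_range]
    simpa only [show ∀ i, j + 1 + i - 1 - j = i by omega] using hH _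
  calc ∑ k ∈ range T, (∑ j ∈ range k, h (k - 1 - j) * a j) ^ 2
      ≤ ∑ k ∈ range T, H * ∑ j ∈ range k, h (k - 1 - j) * a j ^ 2 :=
        sum_le_sum fun k _ => hrow k
    _ = H * ∑ j ∈ range T, (∑ k ∈ Ico (j + 1) T, h (k - 1 - j)) * a j ^ 2 := by
      simp only [← mul_sum, sum_mul, range_eq_Ico]
      rw [sum_Ico_Ico_comm']
    _ ≤ H * ∑ j ∈ range T, H * a j ^ 2 := by gcongr with j; exact hcol j
    _ = H ^ 2 * ∑ j ∈ range T, a j ^ 2 := by rw [← mul_sum]; ring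

section LinearSystem

-- The Frobenius norm is submultiplicative, bounds `*ᵥ` for the Euclidean norm, and is
-- preserved by the entrywise embedding `ℝ → ℂ` needed for Gelfand's formula.
open scoped Matrix.Norms.Frobenius

variable {n w z : Type*} [Fintype n] [Fintype w] [Fintype z]

lemma vecNorm_mulVec_le (N : Matrix z w ℝ) (u : w → ℝ) :
    vecNorm (N *ᵥ u) ≤ ‖N‖ * vecNorm u := by
  simp only [vecNorm_eq_norm, ← frobenius_norm_replicateCol (ι := Unit), replicateCol_mulVec]
  exact frobenius_norm_mul _ _

lemma ltiState_mul_right {κ : Type*} [Fintype κ] (A : Matrix n n ℝ) (B : Matrix n w ℝ)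
    (M : Matrix w κ ℝ) (u : ℕ → κ → ℝ) :
    ltiState A (B * M) u = ltiState A B (fun k => M *ᵥ u k) := by
  funext k
  induction k with
  | zero => rfl
  | succ k ih => simp only [ltiState, ih, mulVec_mulVec]

variable [DecidableEq n]

lemma ltiState_eq_sum (A : Matrix n n ℝ) (B : Matrix n w ℝ) (u : ℕ → w → ℝ) (k : ℕ) :
    ltiState A B u k = ∑ j ∈ range k, (A ^ (k - 1 - j) * B) *ᵥ u j := by
  induction k with
  | zero => rfl
  | succ k ih =>
    rw [ltiState, ih, mulVec_sum, sum_range_succ, Nat.add_sub_cancel, Nat.sub_self, pow_zero,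
      Matrix.one_mul]
    congr 1
    refine sum_congr rfl fun j hj => ?_
    rw [mulVec_mulVec, ← Matrix.mul_assoc, ← pow_succ']
    congr 3
    simp at hj; omega

lemma ltiOutput_zero_eq_sum (A : Matrix n n ℝ) (B : Matrix n w ℝ) (C : Matrix z n ℝ)
    (u : ℕ → w → ℝ) (k : ℕ) :
    ltiOutput A B C 0 u k = ∑ j ∈ range k, (C * A ^ (k - 1 - j) * B) *ᵥ u j := by
  simp [ltiOutput, ltiState_eq_sum, mulVec_sum, mulVec_mulVec, Matrix.mul_assoc]

lemma ltiOutput_zero_smul (A : Matrix n n ℝ) (B : Matrix n w ℝ) (C : Matrix z n ℝ) (c : ℝ)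
    (u : ℕ → w → ℝ) (k : ℕ) :
    ltiOutput A B C 0 (fun j => c • u j) k = c • ltiOutput A B C 0 u k := by
  simp only [ltiOutput_zero_eq_sum, mulVec_smul, smul_sum]

lemma ltiOutput_zero_truncation (A : Matrix n n ℝ) (B : Matrix n w ℝ) (C : Matrix z n ℝ)
    (u : ℕ → w → ℝ) {τ k : ℕ} (hk : k ≤ τ) :
    ltiOutput A B C 0 (truncation u τ) k = ltiOutput A B C 0 u k := by
  simp only [ltiOutput_zero_eq_sum]
  exact sum_congr rfl fun j hj => by rw [truncation_of_le u (by simp at hj; omega)]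

lemma SchurStable.summable_norm_pow {A : Matrix n n ℝ} (hA : SchurStable A) :
    Summable fun k => ‖A ^ k‖ := by
  set B := A.map (algebraMap ℝ ℂ)
  have hAB : ∀ k, ‖A ^ k‖ = ‖B ^ k‖ := fun k => by
    rw [← Matrix.map_pow, frobenius_norm_map_eq _ _ fun a => by simp]
  obtain ⟨c, hρc, hc1⟩ := exists_between hA
  have hc : c ≠ ⊤ := hc1.ne_top
  set r := c.toReal
  have hr0 : 0 < r := ENNReal.toReal_pos (pos_of_gt hρc).ne' hc
  have hr1 : r < 1 := by simpa using ENNReal.toReal_strict_mono ENNReal.one_ne_top hc1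
  have hρr : spectralRadius ℂ B < ENNReal.ofReal r := by rwa [ENNReal.ofReal_toReal hc]
  have hev : ∀ᶠ k : ℕ in atTop, ‖B ^ k‖ ≤ r ^ k := by
    filter_upwards [(spectrum.pow_norm_pow_one_div_tendsto_nhds_spectralRadius B)
      |>.eventually_lt_const hρr, eventually_gt_atTop 0] with k hk hk0
    rw [ENNReal.ofReal_lt_ofReal_iff hr0, one_div,
      Real.rpow_inv_lt_iff_of_pos (norm_nonneg _) hr0.le (by positivity), Real.rpow_natCast] at hk
    exact hk.le
  exact (summable_geometric_of_lt_one hr0.le hr1).of_norm_bounded_eventually_nat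
    (by simpa only [norm_norm, hAB] using hev)

lemma SchurStable.exists_trNorm_ltiOutput_le {A : Matrix n n ℝ} (hA : SchurStable A)
    (B : Matrix n w ℝ) (C : Matrix z n ℝ) :
    ∃ β, 0 ≤ β ∧ ∀ (u : ℕ → w → ℝ) (τ : ℕ), trNorm (ltiOutput A B C 0 u) τ ≤ β * trNorm u τ := by
  set h : ℕ → ℝ := fun i => ‖C * A ^ i * B‖
  set H := ‖C‖ * (∑' i, ‖A ^ i‖) * ‖B‖
  have hH : ∀ k, ∑ i ∈ range k, h i ≤ H := fun k =>
    calc ∑ i ∈ range k, h i ≤ ∑ i ∈ range k, ‖C‖ * ‖A ^ i‖ * ‖B‖ := sum_le_sum fun i _ =>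
          (frobenius_norm_mul _ _).trans
            (mul_le_mul_of_nonneg_right (frobenius_norm_mul _ _) (norm_nonneg _))
      _ = ‖C‖ * (∑ i ∈ range k, ‖A ^ i‖) * ‖B‖ := by rw [← sum_mul, ← mul_sum]
      _ ≤ H := mul_le_mul_of_nonneg_right (mul_le_mul_of_nonneg_left
          (hA.summable_norm_pow.sum_le_tsum _ fun i _ => norm_nonneg _) (norm_nonneg _))
          (norm_nonneg _)
  have hH0 : 0 ≤ H := by simpa using hH 0
  refine ⟨H, hH0, fun u τ => ?_⟩
  have hout : ∀ k, vecNorm (ltiOutput A B C 0 u k)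
      ≤ ∑ j ∈ range k, h (k - 1 - j) * vecNorm (u j) := fun k => by
    rw [ltiOutput_zero_eq_sum]
    exact (vecNorm_sum_le _ _).trans (sum_le_sum fun j _ => vecNorm_mulVec_le _ _)
  rw [trNorm, trNorm, ← Real.sqrt_sq hH0, ← Real.sqrt_mul (sq_nonneg _)]
  refine Real.sqrt_le_sqrt ?_
  calc trNormSq (ltiOutput A B C 0 u) τ
      = ∑ k ∈ range (τ + 1), vecNorm (ltiOutput A B C 0 u k) ^ 2 :=
        trNormSq_eq_sum_vecNorm_sq _ _
    _ ≤ ∑ k ∈ range (τ + 1), (∑ j ∈ range k, h (k - 1 - j) * vecNorm (u j)) ^ 2 :=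
      sum_le_sum fun k _ => pow_le_pow_left₀ (vecNorm_nonneg _) (hout k) 2
    _ ≤ H ^ 2 * ∑ j ∈ range (τ + 1), vecNorm (u j) ^ 2 :=
      sum_range_sq_conv_le (fun i => norm_nonneg _) hH _
    _ = H ^ 2 * trNormSq u τ := by rw [trNormSq_eq_sum_vecNorm_sq]

lemma SchurStable.sigNorm_ltiOutput_le_posL2Gain {A : Matrix n n ℝ} (hA : SchurStable A)
    (B : Matrix n w ℝ) (C : Matrix z n ℝ) {u : ℕ → w → ℝ} (hu0 : ∀ k i, 0 ≤ u k i)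
    (hu : Summable fun k => ∑ i, u k i ^ 2) :
    sigNorm (ltiOutput A B C 0 u) ≤ posL2Gain A B C 0 * sigNorm u := by
  obtain ⟨β, hβ, hG⟩ := hA.exists_trNorm_ltiOutput_le B C
  have hβG : ∀ {u : ℕ → w → ℝ}, Summable (fun k => ∑ i, u k i ^ 2) →
      sigNorm (ltiOutput A B C 0 u) ≤ β * sigNorm u := fun hu =>
    sigNorm_le_of_forall_trNorm_le fun τ =>
      (hG _ τ).trans (mul_le_mul_of_nonneg_left (trNorm_le_sigNorm hu τ) hβ)
  rcases (sigNorm_nonneg u).eq_or_lt with h0 | hpos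
  · simpa [← h0] using hβG hu
  -- normalise `u` to a competitor in the supremum defining `posL2Gain`
  set c := (sigNorm u)⁻¹
  have hc : 0 < c := inv_pos.2 hpos
  have hmem : sigNorm (ltiOutput A B C 0 fun k => c • u k) ≤ posL2Gain A B C 0 := by
    refine le_csSup ⟨β, ?_⟩
      ⟨fun k => c • u k, fun k i => mul_nonneg hc.le (hu0 k i), ?_, ?_, rfl⟩
    · rintro _ ⟨u', -, hu', hu'1, rfl⟩
      simpa [hu'1] using hβG hu'
    · simpa [mul_pow, ← mul_sum] using hu.mul_left (c ^ 2)
    · rw [sigNorm_smul, abs_of_pos hc, inv_mul_cancel₀ hpos.ne']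
  rw [funext (ltiOutput_zero_smul A B C c u), sigNorm_smul, abs_of_pos hc] at hmem
  rwa [← le_div_iff₀' hc, div_eq_mul_inv, inv_inv] at hmem

lemma SchurStable.trNorm_ltiOutput_le_posL2Gain {A : Matrix n n ℝ} (hA : SchurStable A)
    (B : Matrix n w ℝ) (C : Matrix z n ℝ) {u : ℕ → w → ℝ} (hu0 : ∀ k i, 0 ≤ u k i) (τ : ℕ) :
    trNorm (ltiOutput A B C 0 u) τ ≤ posL2Gain A B C 0 * trNorm u τ := by
  obtain ⟨β, hβ, hG⟩ := hA.exists_trNorm_ltiOutput_le B C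
  have hsum : Summable fun k => ∑ i, ltiOutput A B C 0 (truncation u τ) k i ^ 2 :=
    summable_of_forall_trNorm_le fun τ' => (hG _ τ').trans
      (mul_le_mul_of_nonneg_left (trNorm_le_sigNorm (summable_truncation u τ) τ') hβ)
  have hu0' : ∀ k i, 0 ≤ truncation u τ k i := fun k i => by
    unfold truncation; split_ifs <;> simp [hu0]
  calc trNorm (ltiOutput A B C 0 u) τ
      = trNorm (ltiOutput A B C 0 (truncation u τ)) τ :=
        trNorm_congr fun k hk => (ltiOutput_zero_truncation A B C u hk).symm
    _ ≤ sigNorm (ltiOutput A B C 0 (truncation u τ)) := trNorm_le_sigNorm hsum τ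
    _ ≤ posL2Gain A B C 0 * trNorm u τ := by
        rw [← sigNorm_truncation u τ]
        exact hA.sigNorm_ltiOutput_le_posL2Gain B C hu0' (summable_truncation u τ)

end LinearSystem

lemma relu_diagonal_mulVec {ι : Type*} [Fintype ι] [DecidableEq ι] {c : ι → ℝ}
    (hc : ∀ i, 0 ≤ c i) (ξ : ι → ℝ) : relu (diagonal c *ᵥ ξ) = diagonal c *ᵥ relu ξ := by
  funext i
  simp only [relu, mulVec_diagonal, mul_max_of_nonneg _ _ (hc i), mul_zero]

lemma relu_sq_le {ι : Type*} (ξ : ι → ℝ) (i : ι) : relu ξ i ^ 2 ≤ ξ i ^ 2 := by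
  rcases le_total (ξ i) 0 with h | h <;> simp [relu, h, sq_nonneg]

lemma small_gain {g a b Z W : ℝ} (hg : g < 1) (hW0 : 0 ≤ W) (hZ : Z ≤ g * W + a)
    (hW : W ≤ Z + b) : W ≤ (a + b) / (1 - g) ∧ Z ≤ (a + b) / (1 - g) + a := by
  have hW' : W ≤ (a + b) / (1 - g) := by
    rw [le_div_iff₀ (by linarith)]; nlinarith
  exact ⟨hW', by nlinarith⟩

lemma sq_add_sq_le_sq_add {x y a b : ℝ} (hx : 0 ≤ x) (hy : 0 ≤ y) (hxa : x ≤ a) (hyb : y ≤ b) :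
    x ^ 2 + y ^ 2 ≤ (a + b) ^ 2 := by
  nlinarith

section RNN

variable {n m : ℕ} (Λ : Matrix (Fin n) (Fin n) ℝ) (Win : Matrix (Fin n) (Fin m) ℝ)
  (Wout : Matrix (Fin m) (Fin n) ℝ) (s : ℕ → Fin m → ℝ) (v : ℕ → Fin n → ℝ)

def rnnOutput : ℕ → Fin m → ℝ := fun k => Wout *ᵥ rnnState Λ Win Wout s v k

def rnnActivation : ℕ → Fin m → ℝ := fun k => relu (rnnOutput Λ Win Wout s v k + s k)

lemma rnnState_eq_ltiState_add (k : ℕ) :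
    rnnState Λ Win Wout s v k
      = ltiState Λ Win (rnnActivation Λ Win Wout s v) k + ltiState Λ 1 v k := by
  induction k with
  | zero => simp [rnnState, ltiState]
  | succ k ih =>
    change Λ *ᵥ _ + Win *ᵥ rnnActivation Λ Win Wout s v k + v k = _
    rw [ltiState, ltiState, ih, mulVec_add, one_mulVec]
    abel

variable {d e : Fin m → ℝ}

lemma rnnOutput_scaled_eq (hde : ∀ i, d i * e i = 1) :
    (fun k => diagonal e *ᵥ rnnOutput Λ Win Wout s v k)
      = ltiOutput Λ (Win * diagonal d) (diagonal e * Wout) 0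
          (fun k => diagonal e *ᵥ rnnActivation Λ Win Wout s v k)
        + ltiOutput Λ 1 (diagonal e * Wout) 0 v := by
  funext k
  simp [ltiOutput, rnnOutput, ltiState_mul_right, mulVec_mulVec, diagonal_mul_diagonal, hde,
    rnnState_eq_ltiState_add Λ Win Wout s v k, mulVec_add]

lemma rnnActivation_scaled_eq (he : ∀ i, 0 ≤ e i) (k : ℕ) :
    diagonal e *ᵥ rnnActivation Λ Win Wout s v k
      = relu (diagonal e *ᵥ rnnOutput Λ Win Wout s v k + diagonal e *ᵥ s k) := by
  rw [← mulVec_add, relu_diagonal_mulVec he]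
  rfl

lemma trNorm_scaled_rnnOutput_le (hΛ : SchurStable Λ) (hde : ∀ i, d i * e i = 1)
    (he : ∀ i, 0 ≤ e i) {β : ℝ}
    (hβ : ∀ u τ, trNorm (ltiOutput Λ (1 : Matrix (Fin n) (Fin n) ℝ) (diagonal e * Wout) 0 u) τ
      ≤ β * trNorm u τ) (τ : ℕ) :
    trNorm (fun k => diagonal e *ᵥ rnnOutput Λ Win Wout s v k) τ
      ≤ posL2Gain Λ (Win * diagonal d) (diagonal e * Wout) 0
          * trNorm (fun k => diagonal e *ᵥ rnnActivation Λ Win Wout s v k) τ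
        + β * trNorm v τ := by
  rw [rnnOutput_scaled_eq Λ Win Wout s v hde]
  refine (trNorm_add_le _ _ τ).trans (add_le_add
    (hΛ.trNorm_ltiOutput_le_posL2Gain _ _ (fun k i => ?_) τ) (hβ v τ))
  rw [rnnActivation_scaled_eq Λ Win Wout s v he k]
  exact le_max_right _ _

lemma trNorm_scaled_rnnActivation_le (he : ∀ i, 0 ≤ e i) (τ : ℕ) :
    trNorm (fun k => diagonal e *ᵥ rnnActivation Λ Win Wout s v k) τ
      ≤ trNorm (fun k => diagonal e *ᵥ rnnOutput Λ Win Wout s v k) τ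
        + ‖e‖ * trNorm s τ := by
  rw [funext (rnnActivation_scaled_eq Λ Win Wout s v he)]
  exact (trNorm_le_of_sq_le (fun k i => relu_sq_le _ i) τ).trans <|
    (trNorm_add_le _ _ τ).trans (add_le_add le_rfl (trNorm_diagonal_mulVec_le e s τ))

end RNN

lemma SchurStable.exists_trNorm_rnn_le {n m : ℕ} {Λ : Matrix (Fin n) (Fin n) ℝ}
    (hΛ : SchurStable Λ) (Win : Matrix (Fin n) (Fin m) ℝ) (Wout : Matrix (Fin m) (Fin n) ℝ)
    {d : Fin m → ℝ} (hd : ∀ i, 0 < d i)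
    (hg : posL2Gain Λ (Win * diagonal d) (diagonal (fun i => (d i)⁻¹) * Wout) 0 < 1) :
    ∃ c, 0 ≤ c ∧ ∀ s v τ,
      trNorm (rnnOutput Λ Win Wout s v) τ ≤ c * √(trNormSq s τ + trNormSq v τ) ∧
      trNorm (rnnActivation Λ Win Wout s v) τ ≤ c * √(trNormSq s τ + trNormSq v τ) := by
  set e : Fin m → ℝ := fun i => (d i)⁻¹
  have hde : ∀ i, d i * e i = 1 := fun i => mul_inv_cancel₀ (hd i).ne'
  have he : ∀ i, 0 ≤ e i := fun i => (inv_pos.2 (hd i)).le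
  set g := posL2Gain Λ (Win * diagonal d) (diagonal e * Wout) 0
  obtain ⟨β, hβ, hv⟩ := hΛ.exists_trNorm_ltiOutput_le (1 : Matrix (Fin n) (Fin n) ℝ)
    (diagonal e * Wout)
  set c := (β + ‖e‖) / (1 - g)
  have hc : 0 ≤ c := div_nonneg (by positivity) (by linarith)
  refine ⟨‖d‖ * (c + β), by positivity, fun s v τ => ?_⟩
  set P := √(trNormSq s τ + trNormSq v τ)
  have hsP : trNorm s τ ≤ P := Real.sqrt_le_sqrt (le_add_of_nonneg_right (trNormSq_nonneg v τ))
  have hvP : trNorm v τ ≤ P := Real.sqrt_le_sqrt (le_add_of_nonneg_left (trNormSq_nonneg s τ))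
  obtain ⟨hW, hZ⟩ := small_gain hg (trNorm_nonneg _ _)
    ((trNorm_scaled_rnnOutput_le Λ Win Wout s v hΛ hde he hv τ).trans
      (add_le_add le_rfl (mul_le_mul_of_nonneg_left hvP hβ)))
    ((trNorm_scaled_rnnActivation_le Λ Win Wout s v he τ).trans
      (add_le_add le_rfl (mul_le_mul_of_nonneg_left hsP (norm_nonneg e))))
  have hcP : (β * P + ‖e‖ * P) / (1 - g) = c * P := by ring
  have hβP : 0 ≤ β * P := mul_nonneg hβ (Real.sqrt_nonneg _)
  rw [hcP] at hW hZ
  constructor <;> refine (trNorm_le_norm_mul_trNorm_diagonal_mulVec hde _ τ).trans ?_ <;>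
    rw [mul_assoc] <;> refine mul_le_mul_of_nonneg_left ?_ (norm_nonneg d) <;> linarith

/-- scaled small-gain stability condition for the RNN with ReLU activation:
if ‖D⁻¹ G₀ D‖_{2+} < 1 for some positive diagonal scaling D, the RNN is finite-gain
l2 stable. Here z(k) = W_out x(k) and w(k) = Φ(z(k) + s(k)). -/
theorem stmt_17 (n m : ℕ) (Λ : Matrix (Fin n) (Fin n) ℝ)
    (Win : Matrix (Fin n) (Fin m) ℝ) (Wout : Matrix (Fin m) (Fin n) ℝ)
    (hΛ : SchurStable Λ)
    (hgain : ∃ d : Fin m → ℝ, (∀ i, 0 < d i) ∧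
      posL2Gain Λ (Win * Matrix.diagonal d)
        ((Matrix.diagonal fun i => (d i)⁻¹) * Wout)
        (0 : Matrix (Fin m) (Fin m) ℝ) < 1) :
    ∃ γ : ℝ, 0 ≤ γ ∧ ∀ (s : ℕ → Fin m → ℝ) (v : ℕ → Fin n → ℝ) (τ : ℕ),
      trNormSq (fun k => Wout.mulVec (rnnState Λ Win Wout s v k)) τ
        + trNormSq (fun k => relu (Wout.mulVec (rnnState Λ Win Wout s v k) + s k)) τ
      ≤ γ ^ 2 * (trNormSq s τ + trNormSq v τ) := by
  obtain ⟨d, hd, hg⟩ := hgain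
  obtain ⟨c, hc, hbound⟩ := hΛ.exists_trNorm_rnn_le Win Wout hd hg
  refine ⟨2 * c, by positivity, fun s v τ => ?_⟩
  obtain ⟨hz, hw⟩ := hbound s v τ
  change trNormSq (rnnOutput Λ Win Wout s v) τ + trNormSq (rnnActivation Λ Win Wout s v) τ ≤ _
  rw [← trNorm_sq, ← trNorm_sq,
    ← Real.sq_sqrt (add_nonneg (trNormSq_nonneg s τ) (trNormSq_nonneg v τ))]
  calc _ ≤ (c * √(trNormSq s τ + trNormSq v τ) + c * √(trNormSq s τ + trNormSq v τ)) ^ 2 :=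
        sq_add_sq_le_sq_add (trNorm_nonneg _ _) (trNorm_nonneg _ _) hz hw
    _ = _ := by ring

end
end

section
/- Let Λ ∈ ℝ^{n×n}, W_in ∈ ℝ^{n×m}, W_out ∈ ℝ^{m×n}. The following are equivalent: (i) there exist a positive semidefinite P ∈ ℝ^{n×n}, a diagonal D ∈ ℝ^{m×m} with strictly positive diagonal entries, and a copositive Q ∈ ℝ^{m×m} such that L(Λ, W_in D, D^{-1} W_out, 0, P, Q, 1) ≺ 0; (ii) there exist a positive semidefinite P ∈ ℝ^{n×n}, a diagonal S ∈ ℝ^{m×m} with strictly positive diagonal entries, and a copositive Q' ∈ ℝ^{m×m} such that [[−P, 0],[0, −S + Q']] + [Λ, W_in; W_out, 0]ᵀ [P, 0; 0, S] [Λ, W_in; W_out, 0] ≺ 0. -/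
open Matrix

noncomputable section

/-
The two LMIs are congruent. Conjugating `L(Λ, W_in D, D⁻¹ W_out, 0, P, Q, 1)` by the
invertible block matrix `diag(I, D⁻¹)` cancels the scalings on the input and output matrices
and leaves the second LMI with `S = D⁻²` and `Q' = D⁻¹ Q D⁻¹`. Congruence by an invertible
matrix preserves positive definiteness, and congruence by a nonnegative diagonal matrix
preserves copositivity; conversely every positive diagonal `S` is `D⁻²` for `D = S^{-1/2}`.
-/

section ScaledLMI

variable {n w : Type*} [Fintype n] [Fintype w] [DecidableEq n] [DecidableEq w]

/-- `L(A, B, C, 0, P, Q, 1)` with the weights `I` on the output and `γ² I` on the input both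
replaced by the same matrix `S`. -/
def scaledLmat (A : Matrix n n ℝ) (B : Matrix n w ℝ) (C : Matrix w n ℝ) (P : Matrix n n ℝ)
    (S Q : Matrix w w ℝ) : Matrix (n ⊕ w) (n ⊕ w) ℝ :=
  fromBlocks (-P) 0 0 (-S + Q)
    + (fromBlocks A B C (0 : Matrix w w ℝ))ᵀ * fromBlocks P 0 0 S * fromBlocks A B C 0

theorem diagonal_mul_diagonal_inv {K : Type*} [DivisionRing K] {d : w → K}
    (hd : ∀ i, d i ≠ 0) :
    diagonal d * diagonal (fun i => (d i)⁻¹) = 1 := by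
  rw [diagonal_mul_diagonal, ← diagonal_one]
  exact congrArg diagonal (funext fun i => mul_inv_cancel₀ (hd i))

theorem Copositive.diagonal_mul_mul_diagonal {Q : Matrix w w ℝ} (hQ : Copositive Q)
    {e : w → ℝ} (he : ∀ i, 0 ≤ e i) : Copositive (diagonal e * Q * diagonal e) := by
  refine ⟨?_, fun x hx => ?_⟩
  · rw [IsSymm, transpose_mul, transpose_mul, diagonal_transpose, hQ.1, Matrix.mul_assoc]
  · have hex : ∀ i, 0 ≤ (diagonal e *ᵥ x) i := fun i => by
      simpa only [mulVec_diagonal] using mul_nonneg (he i) (hx i)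
    calc (0 : ℝ) ≤ (diagonal e *ᵥ x) ⬝ᵥ Q *ᵥ (diagonal e *ᵥ x) := hQ.2 _ hex
      _ = x ⬝ᵥ (diagonal e * Q * diagonal e) *ᵥ x := by
        rw [← mulVec_mulVec, ← mulVec_mulVec, dotProduct_mulVec x, ← diagonal_transpose e,
          vecMul_transpose, diagonal_transpose]

theorem transpose_mul_Lmat_mul_fromBlocks_one {A : Matrix n n ℝ} {B : Matrix n w ℝ}
    {C : Matrix w n ℝ} {P : Matrix n n ℝ} {Q D E : Matrix w w ℝ} (hDE : D * E = 1) :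
    (fromBlocks (1 : Matrix n n ℝ) 0 0 E)ᵀ * Lmat A (B * D) (E * C) 0 P Q 1
        * fromBlocks 1 0 0 E
      = scaledLmat A B C P (Eᵀ * E) (Eᵀ * Q * E) := by
  have hDEt : Eᵀ * Dᵀ = 1 := by rw [← transpose_mul, hDE, transpose_one]
  simp only [Lmat, scaledLmat, fromBlocks_transpose, fromBlocks_multiply, fromBlocks_add,
    transpose_zero, transpose_one, transpose_mul, Matrix.mul_zero, Matrix.zero_mul,
    Matrix.mul_one, Matrix.one_mul, add_zero, zero_add, neg_zero, one_pow, neg_smul, one_smul,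
    Matrix.add_mul, Matrix.mul_add, Matrix.neg_mul, Matrix.mul_neg, Matrix.mul_assoc, hDE]
  simp only [← Matrix.mul_assoc Eᵀ Dᵀ, hDEt, Matrix.one_mul]

theorem posDef_neg_Lmat_iff {A : Matrix n n ℝ} {B : Matrix n w ℝ} {C : Matrix w n ℝ}
    {P : Matrix n n ℝ} {Q D E : Matrix w w ℝ} (hDE : D * E = 1) :
    (-Lmat A (B * D) (E * C) 0 P Q 1).PosDef
      ↔ (-scaledLmat A B C P (Eᵀ * E) (Eᵀ * Q * E)).PosDef := by
  have hT : IsUnit (fromBlocks (1 : Matrix n n ℝ) 0 0 E) :=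
    IsUnit.of_mul_eq_one (fromBlocks 1 0 0 D) <| by
      rw [fromBlocks_multiply, mul_eq_one_comm.mp hDE]
      simp
  rw [← transpose_mul_Lmat_mul_fromBlocks_one hDE, ← hT.posDef_star_left_conjugate_iff,
    star_eq_conjTranspose, conjTranspose_eq_transpose_of_trivial, Matrix.mul_neg,
    Matrix.neg_mul]

end ScaledLMI

/-- equivalence of the scaled small-gain LMI with diagonal scaling D and
its convexified form with S a positive diagonal matrix. -/
theorem stmt_18 (n m : ℕ) (Λ : Matrix (Fin n) (Fin n) ℝ)
    (Win : Matrix (Fin n) (Fin m) ℝ) (Wout : Matrix (Fin m) (Fin n) ℝ) :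
    (∃ (P : Matrix (Fin n) (Fin n) ℝ) (d : Fin m → ℝ) (Q : Matrix (Fin m) (Fin m) ℝ),
      P.PosSemidef ∧ (∀ i, 0 < d i) ∧ Copositive Q ∧
      (-(Lmat Λ (Win * Matrix.diagonal d)
          ((Matrix.diagonal fun i => (d i)⁻¹) * Wout)
          (0 : Matrix (Fin m) (Fin m) ℝ) P Q 1)).PosDef) ↔
    (∃ (P : Matrix (Fin n) (Fin n) ℝ) (s : Fin m → ℝ) (Q' : Matrix (Fin m) (Fin m) ℝ),
      P.PosSemidef ∧ (∀ i, 0 < s i) ∧ Copositive Q' ∧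
      (-(Matrix.fromBlocks (-P) 0 0 (-(Matrix.diagonal s) + Q')
          + (Matrix.fromBlocks Λ Win Wout (0 : Matrix (Fin m) (Fin m) ℝ))ᵀ
            * Matrix.fromBlocks P 0 0 (Matrix.diagonal s)
            * Matrix.fromBlocks Λ Win Wout (0 : Matrix (Fin m) (Fin m) ℝ))).PosDef) := by
  constructor
  · rintro ⟨P, d, Q, hP, hd, hQ, hL⟩
    have hL' := (posDef_neg_Lmat_iff (diagonal_mul_diagonal_inv fun i => (hd i).ne')).1 hL
    refine ⟨P, fun i => (d i)⁻¹ * (d i)⁻¹, _, hP,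
      fun i => mul_self_pos.2 (inv_ne_zero (hd i).ne'),
      hQ.diagonal_mul_mul_diagonal fun i => (inv_pos.2 (hd i)).le, ?_⟩
    rwa [diagonal_transpose, diagonal_mul_diagonal] at hL'
  · rintro ⟨P, s, Q', hP, hs, hQ', hS⟩
    set d : Fin m → ℝ := fun i => (√(s i))⁻¹
    have hd (i : Fin m) : 0 < d i := inv_pos.2 (Real.sqrt_pos.2 (hs i))
    have hde := diagonal_mul_diagonal_inv fun i => (hd i).ne'
    have hSd : (diagonal fun i => (d i)⁻¹)ᵀ * diagonal (fun i => (d i)⁻¹) = diagonal s := by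
      rw [diagonal_transpose, diagonal_mul_diagonal]
      exact congrArg diagonal (funext fun i => by simp [d, Real.mul_self_sqrt (hs i).le])
    have hQd : (diagonal fun i => (d i)⁻¹)ᵀ * (diagonal d * Q' * diagonal d)
        * diagonal (fun i => (d i)⁻¹) = Q' := by
      rw [diagonal_transpose, ← Matrix.mul_assoc, ← Matrix.mul_assoc, mul_eq_one_comm.1 hde,
        Matrix.one_mul, Matrix.mul_assoc, hde, Matrix.mul_one]
    refine ⟨P, d, _, hP, hd, hQ'.diagonal_mul_mul_diagonal fun i => (hd i).le,
      (posDef_neg_Lmat_iff hde).2 ?_⟩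
    rwa [hSd, hQd]

end
end
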